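/- Let K ⊆ [0,1]^d be a down-closed convex set with 0 ∈ K, and let f : [0,1]^d → ℝ be a non-negative, continuously differentiable, M₁-Lipschitz, continuous DR-submodular function. Define h(x) = 1 − e^{−x} coordinate-wise and F(x) = ∫₀¹ (e^{z−1} / ((1−e^{−1}) z)) · (f(1 − e^{−z x}) − f(0)) dz. Then for all x, y ∈ K: (1/e)·f(y) − f(h(x)) ≤ (1 − e^{−1}) · ⟨∇F(x), y − x⟩. In particular, f is (1/e)-Upper-Linearizable with scaling parameter β = 1 − e^{−1}, reparametrization h, and surrogate potential 𝔤(f,x) = ∇F(x). -/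

import Mathlib

open scoped RealInnerProductSpace

noncomputable section

/-- Membership in the unit box `[0,1]^d`. -/
def inBox {d : ℕ} (x : EuclideanSpace ℝ (Fin d)) : Prop :=
  ∀ i, x i ∈ Set.Icc (0 : ℝ) 1

/-- Continuous DR-submodularity: the gradient is coordinate-wise antitone on `[0,1]^d`. -/
def DRSubmodular {d : ℕ} (f : EuclideanSpace ℝ (Fin d) → ℝ) : Prop :=
  ∀ x y : EuclideanSpace ℝ (Fin d), inBox x → inBox y → (∀ i, x i ≤ y i) →
    ∀ i, gradient f y i ≤ gradient f x i

/-- The exponential reparametrization `h_z(x) = 1 - e^{-z x}` (coordinate-wise). -/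
def hmap {d : ℕ} (z : ℝ) (x : EuclideanSpace ℝ (Fin d)) : EuclideanSpace ℝ (Fin d) :=
  WithLp.toLp 2 (fun i => 1 - Real.exp (-(z * x i)))

/-- Coordinate-wise probabilistic sum `x ⊕ y = 1 - (1-x) ⊙ (1-y)`. -/
def psum {d : ℕ} (x y : EuclideanSpace ℝ (Fin d)) : EuclideanSpace ℝ (Fin d) :=
  WithLp.toLp 2 (fun i => 1 - (1 - x i) * (1 - y i))

/-- Coordinate-wise (Hadamard) product. -/
def had {d : ℕ} (u v : EuclideanSpace ℝ (Fin d)) : EuclideanSpace ℝ (Fin d) :=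
  WithLp.toLp 2 (fun i => u i * v i)

/-- Coordinate-wise exponential `e^{-z x}`. -/
def expv {d : ℕ} (z : ℝ) (x : EuclideanSpace ℝ (Fin d)) : EuclideanSpace ℝ (Fin d) :=
  WithLp.toLp 2 (fun i => Real.exp (-(z * x i)))

/-- The surrogate potential
`F(x) = ∫₀¹ (e^{z-1} / ((1-e⁻¹) z)) (f(1 - e^{-z x}) - f(0)) dz`. -/
def surrogate {d : ℕ} (f : EuclideanSpace ℝ (Fin d) → ℝ)
    (x : EuclideanSpace ℝ (Fin d)) : ℝ :=
  ∫ z in (0:ℝ)..1, (Real.exp (z - 1) / ((1 - Real.exp (-1)) * z)) * (f (hmap z x) - f 0)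

/-- A set `K ⊆ [0,1]^d` is down-closed if `y ∈ K` and `0 ≤ x ≤ y` imply `x ∈ K`. -/
def DownClosed {d : ℕ} (K : Set (EuclideanSpace ℝ (Fin d))) : Prop :=
  ∀ y ∈ K, ∀ x : EuclideanSpace ℝ (Fin d), (∀ i, 0 ≤ x i) → (∀ i, x i ≤ y i) → x ∈ K

/-! Put `φ(z) = f(h_z(x))`. Concavity of `f` along nonnegative directions (a consequence of
DR-submodularity) and the bound `f(h_z(x) ⊕ y) ≥ e^{-z} f(y)` give, for `z ∈ [0,1]`,
`e^{-z} f(y) ≤ φ(z) + φ'(z) + ⟨∇f(h_z(x)), e^{-z x} ⊙ (y - x)⟩`.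
After multiplying by `e^{z-1}`, the first two terms form the derivative of `e^{z-1} φ(z)`,
and differentiating `F` under the integral sign shows that the last term integrates to
`(1 - e⁻¹) ⟨∇F(x), y - x⟩`. -/

open MeasureTheory Set Real
open scoped Interval Gradient

lemma hasDerivAt_euclidean {ι : Type*} [Fintype ι] {c : ℝ → EuclideanSpace ℝ ι}
    {c' : EuclideanSpace ℝ ι} {t : ℝ} :
    HasDerivAt c c' t ↔ ∀ i, HasDerivAt (fun s => c s i) (c' i) t := by
  simp only [hasDerivAt_iff_hasFDerivAt, ← hasFDerivWithinAt_univ, hasFDerivWithinAt_euclidean]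
  refine forall_congr' fun i => ?_
  rw [show PiLp.proj 2 (fun _ => ℝ) i ∘L ContinuousLinearMap.toSpanSingleton ℝ c' =
    ContinuousLinearMap.toSpanSingleton ℝ (c' i) by ext; simp]

lemma hasFDerivAt_euclidean {ι H : Type*} [Fintype ι] [NormedAddCommGroup H] [NormedSpace ℝ H]
    {g : H → EuclideanSpace ℝ ι} {g' : H →L[ℝ] EuclideanSpace ℝ ι} {x : H} :
    HasFDerivAt g g' x ↔ ∀ i, HasFDerivAt (fun a => g a i) (PiLp.proj 2 _ i ∘L g') x := by
  simp only [← hasFDerivWithinAt_univ, hasFDerivWithinAt_euclidean]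

lemma Differentiable.hasDerivAt_comp {F : Type*} [NormedAddCommGroup F] [InnerProductSpace ℝ F]
    [CompleteSpace F] {f : F → ℝ} (hf : Differentiable ℝ f) {c : ℝ → F} {c' : F} {t : ℝ}
    (hc : HasDerivAt c c' t) : HasDerivAt (fun s => f (c s)) ⟪∇ f (c t), c'⟫ t := by
  rw [inner_gradient_left]
  exact (hf (c t)).hasFDerivAt.comp_hasDerivAt t hc

lemma one_sub_exp_neg_one_pos : 0 < 1 - exp (-1) :=
  sub_pos.2 (exp_lt_one_iff.2 (by norm_num))

variable {d : ℕ}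

@[simp] lemma hmap_apply (z : ℝ) (x : EuclideanSpace ℝ (Fin d)) (i : Fin d) :
    hmap z x i = 1 - exp (-(z * x i)) := rfl

@[simp] lemma psum_apply (x y : EuclideanSpace ℝ (Fin d)) (i : Fin d) :
    psum x y i = 1 - (1 - x i) * (1 - y i) := rfl

@[simp] lemma had_apply (u v : EuclideanSpace ℝ (Fin d)) (i : Fin d) : had u v i = u i * v i := rfl

@[simp] lemma expv_apply (z : ℝ) (x : EuclideanSpace ℝ (Fin d)) (i : Fin d) :
    expv z x i = exp (-(z * x i)) := rfl

lemma hmap_zero_left (x : EuclideanSpace ℝ (Fin d)) : hmap 0 x = 0 := by ext i; simp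

lemma psum_hmap_sub_hmap (z : ℝ) (x y : EuclideanSpace ℝ (Fin d)) :
    psum (hmap z x) y - hmap z x = had (expv z x) y := by
  ext i
  simp only [PiLp.sub_apply, psum_apply, hmap_apply, had_apply, expv_apply]
  ring

lemma inBox_hmap {x : EuclideanSpace ℝ (Fin d)} (hx : inBox x) {z : ℝ} (hz : 0 ≤ z) :
    inBox (hmap z x) := fun i => by
  have : exp (-(z * x i)) ≤ 1 := exp_le_one_iff.2 (by nlinarith [(hx i).1])
  simp only [hmap_apply, mem_Icc]
  constructor <;> linarith [exp_pos (-(z * x i))]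

lemma inBox_psum {x y : EuclideanSpace ℝ (Fin d)} (hx : inBox x) (hy : inBox y) :
    inBox (psum x y) := fun i => by
  obtain ⟨hx0, hx1⟩ := hx i
  obtain ⟨hy0, hy1⟩ := hy i
  simp only [psum_apply, mem_Icc]
  constructor <;> nlinarith

lemma le_psum {x y : EuclideanSpace ℝ (Fin d)} (hx : inBox x) (hy : inBox y) (i : Fin d) :
    x i ≤ psum x y i := by
  simp only [psum_apply]
  nlinarith [(hx i).2, (hy i).1]

def hadamardL :
    EuclideanSpace ℝ (Fin d) →ₗ[ℝ] EuclideanSpace ℝ (Fin d) →L[ℝ] EuclideanSpace ℝ (Fin d) :=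
  LinearMap.toContinuousLinearMap.toLinearMap ∘ₗ LinearMap.mk₂ ℝ had
    (fun _ _ _ => by ext; simp [add_mul]) (fun _ _ _ => by ext; simp [mul_assoc])
    (fun _ _ _ => by ext; simp [mul_add]) (fun _ _ _ => by ext; simp [mul_left_comm])

@[simp] lemma hadamardL_apply (u v : EuclideanSpace ℝ (Fin d)) : hadamardL u v = had u v := rfl

lemma continuous_hadamardL : Continuous (hadamardL (d := d)) :=
  hadamardL.continuous_of_finiteDimensional

lemma continuous_hmap : Continuous fun p : ℝ × EuclideanSpace ℝ (Fin d) => hmap p.1 p.2 := by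
  unfold hmap; fun_prop

lemma continuous_expv : Continuous fun p : ℝ × EuclideanSpace ℝ (Fin d) => expv p.1 p.2 := by
  unfold expv; fun_prop

lemma hasFDerivAt_hmap (z : ℝ) (x : EuclideanSpace ℝ (Fin d)) :
    HasFDerivAt (hmap z) (z • hadamardL (expv z x)) x := by
  refine hasFDerivAt_euclidean.2 fun i => ?_
  refine ((((hasDerivAt_id (x i)).const_mul z).fun_neg.exp.const_sub 1).comp_hasFDerivAt x
    (PiLp.hasFDerivAt_apply (𝕜 := ℝ) 2 x i)).congr_fderiv ?_
  ext v
  simp only [id_eq, mul_one, mul_neg, neg_neg, smul_apply,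
    ContinuousLinearMap.comp_apply, PiLp.proj_apply, hadamardL_apply, had_apply, expv_apply,
    PiLp.smul_apply, smul_eq_mul]
  ring

lemma hasDerivAt_hmap_left (s : ℝ) (x : EuclideanSpace ℝ (Fin d)) :
    HasDerivAt (fun t => hmap t x) (had (expv s x) x) s := by
  refine hasDerivAt_euclidean.2 fun i => ?_
  exact (((hasDerivAt_id s).mul_const (x i)).fun_neg.exp.const_sub 1).congr_deriv (by simp)

namespace DRSubmodular

variable {f : EuclideanSpace ℝ (Fin d) → ℝ}

lemma inner_gradient_le (hDR : DRSubmodular f) {a b v : EuclideanSpace ℝ (Fin d)}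
    (ha : inBox a) (hb : inBox b) (hab : ∀ i, a i ≤ b i) (hv : ∀ i, 0 ≤ v i) :
    ⟪∇ f b, v⟫ ≤ ⟪∇ f a, v⟫ := by
  simp only [PiLp.inner_apply, RCLike.inner_apply, conj_trivial]
  exact Finset.sum_le_sum fun i _ => mul_le_mul_of_nonneg_left (hDR a b ha hb hab i) (hv i)

lemma sub_le_inner_gradient (hf : Differentiable ℝ f) (hDR : DRSubmodular f)
    {p q : EuclideanSpace ℝ (Fin d)} (hp : inBox p) (hq : inBox q) (hpq : ∀ i, p i ≤ q i) :
    f q - f p ≤ ⟪∇ f p, q - p⟫ := by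
  have hseg : ∀ t ∈ Icc (0 : ℝ) 1,
      inBox (p + t • (q - p)) ∧ ∀ i, p i ≤ (p + t • (q - p)) i := by
    intro t ⟨ht0, ht1⟩
    have hqp i : 0 ≤ t * (q i - p i) := mul_nonneg ht0 (sub_nonneg.2 (hpq i))
    have hqp' i : t * (q i - p i) ≤ q i - p i := mul_le_of_le_one_left (sub_nonneg.2 (hpq i)) ht1
    refine ⟨fun i => ?_, fun i => ?_⟩ <;>
      simp only [PiLp.add_apply, PiLp.smul_apply, PiLp.sub_apply, smul_eq_mul, mem_Icc]
    · constructor <;> linarith [(hp i).1, (hq i).2, hqp i, hqp' i]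
    · linarith [hqp i]
  have hderiv t : HasDerivAt (fun s : ℝ => f (p + s • (q - p))) ⟪∇ f (p + t • (q - p)), q - p⟫ t :=
    hf.hasDerivAt_comp
      ((((hasDerivAt_id t).smul_const (q - p)).const_add p).congr_deriv (one_smul _ _))
  have key := (convex_Icc (0 : ℝ) 1).image_sub_le_mul_sub_of_deriv_le
    (fun t _ => (hderiv t).continuousAt.continuousWithinAt)
    (fun t _ => (hderiv t).differentiableAt.differentiableWithinAt)
    (fun t ht => by
      obtain ⟨hbox, hle⟩ := hseg t (interior_subset ht)
      rw [(hderiv t).deriv]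
      exact hDR.inner_gradient_le hp hbox hle fun i => sub_nonneg.2 (hpq i))
    0 (left_mem_Icc.2 zero_le_one) 1 (right_mem_Icc.2 zero_le_one) zero_le_one
  simpa using key

lemma exp_neg_mul_le_apply_psum (hf : Differentiable ℝ f) (hpos : ∀ x, inBox x → 0 ≤ f x)
    (hDR : DRSubmodular f) {x y : EuclideanSpace ℝ (Fin d)} (hx : inBox x) (hy : inBox y)
    {z : ℝ} (hz : 0 ≤ z) :
    exp (-z) * f y ≤ f (psum (hmap z x) y) := by
  set q : ℝ → EuclideanSpace ℝ (Fin d) := fun s => psum (hmap s x) y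
  have hq s : HasDerivAt q (psum (q s) x - q s) s :=
    hasDerivAt_euclidean.2 fun i =>
      (((hasDerivAt_euclidean.1 (hasDerivAt_hmap_left s x) i).const_sub 1).mul_const (1 - y i)
        |>.const_sub 1).congr_deriv (by simp [q]; ring)
  have hβ s : HasDerivAt (fun s => exp s * f (q s))
      (exp s * (f (q s) + ⟪∇ f (q s), psum (q s) x - q s⟫)) s :=
    ((hasDerivAt_exp s).mul (hf.hasDerivAt_comp (hq s))).congr_deriv (mul_add _ _ _).symm
  -- the derivative is at least `e^s f (q s ⊕ x) ≥ 0`, by concavity along `q s ⊕ x - q s ≥ 0`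
  have hmono : MonotoneOn (fun s => exp s * f (q s)) (Icc 0 z) :=
    monotoneOn_of_hasDerivWithinAt_nonneg (convex_Icc 0 z)
      (fun s _ => (hβ s).continuousAt.continuousWithinAt) (fun s _ => (hβ s).hasDerivWithinAt)
      fun s hs => by
        have hqs : inBox (q s) := inBox_psum (inBox_hmap hx (interior_subset hs).1) hy
        have h₁ := hDR.sub_le_inner_gradient hf hqs (inBox_psum hqs hx) (le_psum hqs hx)
        have h₂ := hpos _ (inBox_psum hqs hx)
        exact mul_nonneg (exp_pos s).le (by linarith)
  have hq0 : q 0 = y := by ext i; simp [q]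
  have h := hmono (left_mem_Icc.2 hz) (right_mem_Icc.2 hz) hz
  simp only [exp_zero, one_mul, hq0] at h
  calc exp (-z) * f y ≤ exp (-z) * (exp z * f (q z)) := by gcongr
    _ = f (q z) := by rw [← mul_assoc, ← exp_add, neg_add_cancel, exp_zero, one_mul]

lemma exp_neg_mul_le (hf : Differentiable ℝ f) (hpos : ∀ x, inBox x → 0 ≤ f x)
    (hDR : DRSubmodular f) {x y : EuclideanSpace ℝ (Fin d)} (hx : inBox x) (hy : inBox y)
    {z : ℝ} (hz : 0 ≤ z) :
    exp (-z) * f y ≤ f (hmap z x) + ⟪∇ f (hmap z x), had (expv z x) y⟫ := by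
  have hu := inBox_hmap hx hz
  have h := hDR.sub_le_inner_gradient hf hu (inBox_psum hu hy) (le_psum hu hy)
  rw [psum_hmap_sub_hmap] at h
  linarith [hDR.exp_neg_mul_le_apply_psum hf hpos hx hy hz]

end DRSubmodular

section Surrogate

variable {f : EuclideanSpace ℝ (Fin d) → ℝ}

lemma continuous_fderiv_comp_hadamardL (hf : ContDiff ℝ 1 f) :
    Continuous fun p : ℝ × EuclideanSpace ℝ (Fin d) =>
      (fderiv ℝ f (hmap p.1 p.2)).comp (hadamardL (expv p.1 p.2)) :=
  ((hf.continuous_fderiv one_ne_zero).comp continuous_hmap).clm_comp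
    (continuous_hadamardL.comp continuous_expv)

lemma continuous_inner_gradient_hmap (hf : ContDiff ℝ 1 f) (x v : EuclideanSpace ℝ (Fin d)) :
    Continuous fun z => ⟪∇ f (hmap z x), had (expv z x) v⟫ := by
  simp only [inner_gradient_left, ← hadamardL_apply, ← ContinuousLinearMap.comp_apply]
  exact ((continuous_fderiv_comp_hadamardL hf).comp
    (continuous_id.prodMk continuous_const)).clm_apply continuous_const

/-- The integrand of `surrogate f x` is `e^{z-1}/(1-e⁻¹)` times the slope of `z ↦ f (hmap z x)`
at `0`, which extends continuously to `z = 0`. -/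
lemma intervalIntegrable_surrogate_integrand (hf : Differentiable ℝ f)
    (x : EuclideanSpace ℝ (Fin d)) :
    IntervalIntegrable
      (fun z => exp (z - 1) / ((1 - exp (-1)) * z) * (f (hmap z x) - f 0)) volume 0 1 := by
  set φ := fun z => f (hmap z x)
  have hφ : Differentiable ℝ φ := fun s =>
    (hf.hasDerivAt_comp (hasDerivAt_hmap_left s x)).differentiableAt
  have hslope : Continuous (dslope φ 0) := continuousOn_univ.1
    ((continuousOn_dslope Filter.univ_mem).2 ⟨hφ.continuous.continuousOn, hφ 0⟩)
  refine ((by fun_prop : Continuous fun z : ℝ => exp (z - 1) / (1 - exp (-1)) * dslope φ 0 z)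
    |>.intervalIntegrable 0 1).congr fun z hz => ?_
  rw [uIoc_of_le zero_le_one] at hz
  simp only [dslope_of_ne _ hz.1.ne', slope_def_field, φ, hmap_zero_left, sub_zero]
  field_simp

lemma hasFDerivAt_surrogate (hf : ContDiff ℝ 1 f) (x : EuclideanSpace ℝ (Fin d)) :
    HasFDerivAt (surrogate f)
      (∫ z in (0 : ℝ)..1, (exp (z - 1) / (1 - exp (-1))) •
        (fderiv ℝ f (hmap z x)).comp (hadamardL (expv z x))) x := by
  have hdiff := hf.differentiable one_ne_zero
  have hG := continuous_fderiv_comp_hadamardL hf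
  obtain ⟨M, hM⟩ := (isCompact_Icc.prod (isCompact_closedBall x 1)).exists_bound_of_continuousOn
    hG.continuousOn
  have hIoc : Ι (0 : ℝ) 1 = Ioc 0 1 := uIoc_of_le zero_le_one
  -- the factor `z` in `fderiv (hmap z)` cancels the `1 / z` of the weight
  refine intervalIntegral.hasFDerivAt_integral_of_dominated_of_fderiv_le
    (F' := fun a z => (exp (z - 1) / (1 - exp (-1))) •
      (fderiv ℝ f (hmap z a)).comp (hadamardL (expv z a)))
    (bound := fun _ => M / (1 - exp (-1))) (Metric.closedBall_mem_nhds x one_pos)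
    (.of_forall fun a => ?_) (intervalIntegrable_surrogate_integrand hdiff x)
    ((by fun_prop : Continuous fun z : ℝ => exp (z - 1) / (1 - exp (-1))).smul
      (hG.comp (continuous_id.prodMk continuous_const))).aestronglyMeasurable
    (.of_forall fun z hz a ha => ?_) intervalIntegrable_const (.of_forall fun z hz a _ => ?_)
  · have hφ : Continuous fun z => f (hmap z a) := hdiff.continuous.comp
      (continuous_hmap.comp (continuous_id.prodMk continuous_const))
    exact ((by fun_prop : Measurable fun z : ℝ => exp (z - 1) / ((1 - exp (-1)) * z)).mul
      (hφ.sub continuous_const).measurable).aestronglyMeasurable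
  · rw [hIoc] at hz
    have hexp : exp (z - 1) ≤ 1 := exp_le_one_iff.2 (by linarith [hz.2])
    rw [norm_smul, Real.norm_of_nonneg (div_nonneg (exp_pos _).le one_sub_exp_neg_one_pos.le),
      div_mul_eq_mul_div]
    gcongr
    · exact one_sub_exp_neg_one_pos.le
    · exact (mul_le_of_le_one_left (norm_nonneg _) hexp).trans
        (hM (z, a) ⟨Ioc_subset_Icc_self hz, ha⟩)
  · rw [hIoc] at hz
    refine (((hdiff _).hasFDerivAt.comp a (hasFDerivAt_hmap z a)).sub_const (f 0)
      |>.const_mul _).congr_fderiv ?_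
    have := one_sub_exp_neg_one_pos.ne'
    ext v
    simp only [smul_apply, ContinuousLinearMap.comp_apply,
      ContinuousLinearMap.comp_smulₛₗ, RingHom.id_apply, hadamardL_apply, smul_eq_mul]
    field_simp [hz.1.ne']

lemma inner_gradient_surrogate (hf : ContDiff ℝ 1 f) (x v : EuclideanSpace ℝ (Fin d)) :
    (1 - exp (-1)) * ⟪∇ (surrogate f) x, v⟫ =
      ∫ z in (0 : ℝ)..1, exp (z - 1) * ⟪∇ f (hmap z x), had (expv z x) v⟫ := by
  have hint : Continuous fun z => (exp (z - 1) / (1 - exp (-1))) •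
      (fderiv ℝ f (hmap z x)).comp (hadamardL (expv z x)) :=
    (by fun_prop : Continuous fun z : ℝ => exp (z - 1) / (1 - exp (-1))).smul
      ((continuous_fderiv_comp_hadamardL hf).comp (continuous_id.prodMk continuous_const))
  rw [inner_gradient_left, (hasFDerivAt_surrogate hf x).fderiv,
    ContinuousLinearMap.intervalIntegral_apply (hint.intervalIntegrable 0 1),
    ← intervalIntegral.integral_const_mul]
  congr 1
  ext z
  have := one_sub_exp_neg_one_pos.ne'
  simp only [smul_apply, ContinuousLinearMap.comp_apply, hadamardL_apply,
    smul_eq_mul, inner_gradient_left]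
  field_simp

end Surrogate

lemma sub_le_integral_exp_mul {φ φ' S : ℝ → ℝ} {c : ℝ} (hφ : ∀ z, HasDerivAt φ (φ' z) z)
    (hφ' : Continuous φ') (hS : Continuous S)
    (h : ∀ z ∈ Icc (0 : ℝ) 1, exp (-z) * c ≤ φ z + φ' z + S z) :
    exp (-1) * c - φ 1 + exp (-1) * φ 0 ≤ ∫ z in (0 : ℝ)..1, exp (z - 1) * S z := by
  have hφc : Continuous φ := continuous_iff_continuousAt.2 fun z => (hφ z).continuousAt
  have hint : IntervalIntegrable (fun z => exp (z - 1) * (φ z + φ' z)) volume 0 1 :=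
    Continuous.intervalIntegrable (by fun_prop) 0 1
  have hftc : ∫ z in (0 : ℝ)..1, exp (z - 1) * (φ z + φ' z) = φ 1 - exp (-1) * φ 0 := by
    rw [intervalIntegral.integral_eq_sub_of_hasDerivAt (f := fun z => exp (z - 1) * φ z)
      (fun z _ => (((hasDerivAt_id z).sub_const 1).exp.mul (hφ z)).congr_deriv
        (by simp only [id_eq, mul_one]; ring)) hint]
    simp
  calc exp (-1) * c - φ 1 + exp (-1) * φ 0
      = ∫ z in (0 : ℝ)..1, (exp (-1) * c - exp (z - 1) * (φ z + φ' z)) := by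
        rw [intervalIntegral.integral_sub intervalIntegrable_const hint,
          intervalIntegral.integral_const, hftc, sub_zero, one_smul]
        ring
    _ ≤ ∫ z in (0 : ℝ)..1, exp (z - 1) * S z := by
        refine intervalIntegral.integral_mono_on zero_le_one
          (intervalIntegrable_const.sub hint) (Continuous.intervalIntegrable (by fun_prop) 0 1)
          fun z hz => ?_
        have h' := mul_le_mul_of_nonneg_left (h z hz) (exp_pos (z - 1)).le
        rw [← mul_assoc, ← exp_add, show z - 1 + -z = -1 by ring] at h'
        linarith

theorem stmt1_general {d : ℕ} (K : Set (EuclideanSpace ℝ (Fin d)))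
    (hKbox : ∀ x ∈ K, inBox x)
    (f : EuclideanSpace ℝ (Fin d) → ℝ)
    (hf : ContDiff ℝ 1 f) (hpos : ∀ x, inBox x → 0 ≤ f x)
    (hDR : DRSubmodular f) :
    ∀ x ∈ K, ∀ y ∈ K,
      (1 / Real.exp 1) * f y - f (hmap 1 x) ≤
        (1 - Real.exp (-1)) * @inner ℝ _ _ (gradient (surrogate f) x) (y - x) := by
  intro x hx y hy
  have hdiff := hf.differentiable one_ne_zero
  have key := sub_le_integral_exp_mul (c := f y)
    (fun z => hdiff.hasDerivAt_comp (hasDerivAt_hmap_left z x))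
    (continuous_inner_gradient_hmap hf x x) (continuous_inner_gradient_hmap hf x (y - x))
    fun z hz => by
      have hsplit : had (expv z x) y = had (expv z x) x + had (expv z x) (y - x) := by
        ext i
        simp only [had_apply, PiLp.add_apply, PiLp.sub_apply]
        ring
      have := hDR.exp_neg_mul_le hdiff hpos (hKbox x hx) (hKbox y hy) hz.1
      rwa [hsplit, inner_add_right, ← add_assoc] at this
  have hf0 := hpos 0 fun i => by simp
  rw [← inner_gradient_surrogate hf, hmap_zero_left] at key
  rw [one_div, ← exp_neg]
  nlinarith [exp_pos (-1)]

/-- Main theorem: `1/e`-Upper-Linearizability.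
For a down-closed convex `K ⊆ [0,1]^d` with `0 ∈ K` and a non-negative, continuously
differentiable, `M₁`-Lipschitz, continuous DR-submodular `f`, with `h(x) = 1 - e^{-x}`
(i.e. `h = h_1`) and surrogate potential `F`, for all `x, y ∈ K`:
`(1/e) f(y) - f(h(x)) ≤ (1 - e⁻¹) ⟨∇F(x), y - x⟩`, i.e. `f` is `1/e`-Upper-Linearizable
with scaling parameter `β = 1 - e⁻¹`, reparametrization `h`, and surrogate potential
`𝔤(f,x) = ∇F(x)`. -/
theorem stmt1 {d : ℕ} (K : Set (EuclideanSpace ℝ (Fin d)))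
    (hKbox : ∀ x ∈ K, inBox x) (hKconv : Convex ℝ K) (hKdc : DownClosed K)
    (hK0 : (0 : EuclideanSpace ℝ (Fin d)) ∈ K)
    (f : EuclideanSpace ℝ (Fin d) → ℝ) (M₁ : ℝ)
    (hf : ContDiff ℝ 1 f) (hpos : ∀ x, inBox x → 0 ≤ f x)
    (hLip : ∀ x, inBox x → ‖gradient f x‖ ≤ M₁) (hDR : DRSubmodular f) :
    ∀ x ∈ K, ∀ y ∈ K,
      (1 / Real.exp 1) * f y - f (hmap 1 x) ≤
        (1 - Real.exp (-1)) * @inner ℝ _ _ (gradient (surrogate f) x) (y - x) :=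
  stmt1_general K hKbox f hf hpos hDR
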